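/- arXiv:1307.4808 — 3 statements merged into one kernel-verified Lean document; each statement's English description precedes it below -/
import Mathlib

section
/- Let φ : ℝ → ℝ be a Schwartz function. Then there is a constant C = C(φ) such that for all ρ ≥ 1 and all y ∈ ℝ: |φ(ρ y) − φ(ρ sinh y)| ≤ C ρ^{−2} (1 + (ρ y)²)^{−1}. -/
/-! Write `a = ρ y` and `b = ρ sinh y`. Since `y` and `sinh y` have the same sign and
`|y| ≤ |sinh y|`, every point of the segment `[a, b]` has modulus at least `|a|`.
For `|y| ≥ 1` we have `ρ² ≤ a²`, and the decay `|φ x| ≲ (1 + x²)⁻²` at `a` and `b` suffices.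
For `|y| ≤ 1` the Taylor bound `|sinh y - y| ≤ |y|³` gives `ρ² |a - b| ≤ |a|³`, and the mean
value theorem with `|φ' x| ≲ (1 + x²)⁻³` on the segment bounds the difference by
`|a|³ / (ρ² (1 + a²)³) ≤ 1 / (ρ² (1 + a²))`. -/

open Real Set

namespace Real

theorem abs_exp_sub_quadratic_le {x : ℝ} (hx : |x| ≤ 1) :
    |exp x - (1 + x + x ^ 2 / 2)| ≤ 2 / 9 * |x| ^ 3 := by
  have h := exp_bound hx (n := 3) (by norm_num)
  norm_num [Finset.sum_range_succ] at h
  linarith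

theorem abs_sinh_sub_self_le {y : ℝ} (hy : |y| ≤ 1) : |sinh y - y| ≤ |y| ^ 3 := by
  have hpos := abs_exp_sub_quadratic_le hy
  have hneg := abs_exp_sub_quadratic_le (x := -y) (by rwa [abs_neg])
  rw [abs_neg, neg_sq] at hneg
  have hsplit : sinh y - y =
      ((exp y - (1 + y + y ^ 2 / 2)) - (exp (-y) - (1 + -y + y ^ 2 / 2))) / 2 := by
    rw [sinh_eq]; ring
  rw [hsplit, abs_div, abs_two]
  linarith [abs_sub (exp y - (1 + y + y ^ 2 / 2)) (exp (-y) - (1 + -y + y ^ 2 / 2)),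
    pow_nonneg (abs_nonneg y) 3]

theorem abs_le_abs_sinh (y : ℝ) : |y| ≤ |sinh y| := by
  rw [abs_sinh]; exact self_le_sinh_iff.2 (abs_nonneg y)

theorem mul_sinh_nonneg (y : ℝ) : 0 ≤ y * sinh y := by
  rcases le_total 0 y with hy | hy
  · exact mul_nonneg hy (sinh_nonneg_iff.2 hy)
  · exact mul_nonneg_of_nonpos_of_nonpos hy (sinh_nonpos_iff.2 hy)

end Real

theorem abs_le_abs_of_mem_uIcc {a b x : ℝ} (hab : |a| ≤ |b|) (hsign : 0 ≤ a * b)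
    (hx : x ∈ uIcc a b) : |a| ≤ |x| := by
  have hab' : a ^ 2 ≤ a * b := by
    rw [← abs_of_nonneg hsign, abs_mul, ← sq_abs, sq]
    exact mul_le_mul_of_nonneg_left hab (abs_nonneg a)
  have hax : a ^ 2 ≤ a * x := by
    rw [mem_uIcc] at hx
    rcases le_total 0 a with ha | ha <;> rcases hx with ⟨h1, h2⟩ | ⟨h1, h2⟩ <;> nlinarith
  by_contra! hlt
  nlinarith [abs_nonneg x, abs_mul_abs_self a, abs_mul a x, le_abs_self (a * x)]

namespace SchwartzMap

theorem exists_norm_mul_one_add_sq_pow_le {F : Type*} [NormedAddCommGroup F] [NormedSpace ℝ F]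
    (f : 𝓢(ℝ, F)) (k : ℕ) : ∃ C, 0 < C ∧ ∀ x : ℝ, ‖f x‖ * (1 + x ^ 2) ^ k ≤ C := by
  refine ⟨2 ^ (2 * k) * (Finset.Iic (2 * k, 0)).sup (fun m => SchwartzMap.seminorm ℝ m.1 m.2) f
    + 1, by positivity, fun x => le_trans ?_ <| le_add_of_le_of_nonneg
      (one_add_le_sup_seminorm_apply (m := (2 * k, 0)) le_rfl le_rfl f x) zero_le_one⟩
  have hsq : 1 + x ^ 2 ≤ (1 + ‖x‖) ^ 2 := by
    rw [norm_eq_abs]; nlinarith [abs_nonneg x, sq_abs x]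
  rw [norm_iteratedFDeriv_zero, pow_mul, mul_comm]
  gcongr

end SchwartzMap

theorem abs_sub_mul_le_of_decay {f : ℝ → ℝ} {A : ℝ} (hA : ∀ x, |f x| * (1 + x ^ 2) ^ 2 ≤ A)
    {a b ρ : ℝ} (hab : |a| ≤ |b|) (hρa : ρ ^ 2 ≤ a ^ 2) :
    |f a - f b| * (ρ ^ 2 * (1 + a ^ 2)) ≤ 2 * A := by
  have hb : |f b| * (1 + a ^ 2) ^ 2 ≤ A := by
    have hsq : a ^ 2 ≤ b ^ 2 := sq_le_sq.2 hab
    refine le_trans ?_ (hA b)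
    gcongr
  calc |f a - f b| * (ρ ^ 2 * (1 + a ^ 2))
      ≤ (|f a| + |f b|) * (1 + a ^ 2) ^ 2 := by
        rw [sq (1 + a ^ 2)]; gcongr
        · exact abs_sub _ _
        · linarith
    _ ≤ 2 * A := by linarith [hA a]

theorem abs_sub_mul_le_of_deriv_decay {f : ℝ → ℝ} (hf : Differentiable ℝ f) {B : ℝ}
    (hB : ∀ x, |deriv f x| * (1 + x ^ 2) ^ 3 ≤ B) {a b ρ : ℝ}
    (hseg : ∀ x ∈ uIcc a b, |a| ≤ |x|) (hgap : ρ ^ 2 * |a - b| ≤ |a| ^ 3) :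
    |f a - f b| * (ρ ^ 2 * (1 + a ^ 2)) ≤ B := by
  have hB0 : 0 ≤ B := (by positivity : 0 ≤ |deriv f 0| * (1 + 0 ^ 2) ^ 3).trans (hB 0)
  have hderiv : ∀ x ∈ uIcc a b, ‖deriv f x‖ ≤ B / (1 + a ^ 2) ^ 3 := fun x hx => by
    rw [le_div_iff₀ (by positivity), norm_eq_abs]
    have hsq : a ^ 2 ≤ x ^ 2 := sq_le_sq.2 (hseg x hx)
    refine le_trans ?_ (hB x)
    gcongr
  have hmvt : |f a - f b| ≤ B / (1 + a ^ 2) ^ 3 * |a - b| := by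
    simpa only [norm_eq_abs] using (convex_uIcc a b).norm_image_sub_le_of_norm_deriv_le
      (fun x _ => hf x) hderiv right_mem_uIcc left_mem_uIcc
  have hcube : |a| ^ 3 ≤ (1 + a ^ 2) ^ 2 := by
    nlinarith [sq_abs a, abs_nonneg a, sq_nonneg (|a| - 1)]
  calc |f a - f b| * (ρ ^ 2 * (1 + a ^ 2))
      ≤ B / (1 + a ^ 2) ^ 3 * |a - b| * (ρ ^ 2 * (1 + a ^ 2)) := by gcongr
    _ = B * (ρ ^ 2 * |a - b|) / (1 + a ^ 2) ^ 2 := by field_simp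
    _ ≤ B * (1 + a ^ 2) ^ 2 / (1 + a ^ 2) ^ 2 := by gcongr; exact hgap.trans hcube
    _ = B := by field_simp

/-- pointwise coefficient approximation:
`|φ(ρy) - φ(ρ sinh y)| ≤ C ρ^{-2} ⟨ρy⟩^{-2}`. -/
theorem stmt_5 (φ : SchwartzMap ℝ ℝ) :
    ∃ C : ℝ, 0 < C ∧ ∀ ρ : ℝ, 1 ≤ ρ → ∀ y : ℝ,
      |φ (ρ * y) - φ (ρ * Real.sinh y)| ≤ C * (ρ ^ 2)⁻¹ * (1 + (ρ * y) ^ 2)⁻¹ := by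
  obtain ⟨A, hA0, hA⟩ := φ.exists_norm_mul_one_add_sq_pow_le 2
  obtain ⟨B, hB0, hB⟩ := (SchwartzMap.derivCLM ℝ ℝ φ).exists_norm_mul_one_add_sq_pow_le 3
  simp only [SchwartzMap.derivCLM_apply, norm_eq_abs] at hA hB
  refine ⟨2 * A + B, by positivity, fun ρ hρ y => ?_⟩
  set a := ρ * y
  set b := ρ * sinh y
  have hρ0 : 0 < ρ := one_pos.trans_le hρ
  have hab : |a| ≤ |b| := by
    simp only [a, b, abs_mul]; exact mul_le_mul_of_nonneg_left (abs_le_abs_sinh y) (abs_nonneg ρ)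
  have key : |φ a - φ b| * (ρ ^ 2 * (1 + a ^ 2)) ≤ 2 * A + B := by
    rcases le_total 1 |y| with hy | hy
    · have hρa : ρ ^ 2 ≤ a ^ 2 := by
        simp only [a, mul_pow]; nlinarith [one_le_sq_iff_one_le_abs y |>.2 hy]
      linarith [abs_sub_mul_le_of_decay hA hab hρa]
    · have hsign : 0 ≤ a * b := by
        simp only [a, b]; nlinarith [mul_sinh_nonneg y, sq_nonneg ρ]
      have hgap : ρ ^ 2 * |a - b| ≤ |a| ^ 3 :=
        calc ρ ^ 2 * |a - b| = ρ ^ 3 * |sinh y - y| := by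
              rw [← mul_sub, abs_mul, abs_of_pos hρ0, abs_sub_comm]; ring
          _ ≤ ρ ^ 3 * |y| ^ 3 := by gcongr; exact abs_sinh_sub_self_le hy
          _ = |a| ^ 3 := by rw [abs_mul, abs_of_pos hρ0]; ring
      linarith [abs_sub_mul_le_of_deriv_decay φ.differentiable hB
        (fun x hx => abs_le_abs_of_mem_uIcc hab hsign hx) hgap]
  rw [mul_assoc, ← mul_inv, ← div_eq_mul_inv, le_div_iff₀ (by positivity)]
  exact key
end

section
/- Let ψ : ℝ → ℝ be a Schwartz function and define G(ρ,y) = ρ^{−2} (1 + cosh y)^{−1} ψ(ρ sinh y) for ρ ≥ 1, y ∈ ℝ. Then for every n, m ∈ ℕ and every p ∈ [1,∞] there is a constant C = C(n,m,p,ψ) such that for all ρ ≥ 1: ‖ ∂_ρ^n ( ρ^{−m} ∂_y^m G(ρ,·) ) ‖_{L^p(ℝ, dy)} ≤ C ρ^{−2 − 1/p}, with the convention 1/∞ = 0. -/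
open Real MeasureTheory
open scoped ENNReal SchwartzMap

/-!
Let `V_d` be the span of the monomials
`r ^ s * sinh y ^ i * cosh y ^ l * (1 + cosh y)⁻¹ ^ j * φ (r * sinh y)` with `φ` Schwartz and
`s ≤ d`. By the chain rule `∂_y` maps `V_d` into `V_(d+1)`, and `∂_r` preserves `V_d`.
Since `ρ⁻ᵐ G` is a single monomial with `s = -m - 2` and `ρ⁻ᵐ` commutes with `∂_y`, the function
`∂_ρⁿ (ρ⁻ᵐ ∂_yᵐ G)` lies in `V_(-2)`. For `ρ ≥ 1` the decay of `φ` at `ρ sinh y` absorbs all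
powers of `sinh` and `cosh`, so each monomial is bounded by `B ρ⁻² cosh y / (1 + (ρ sinh y)²)`.
This weight is at most `1` and has integral `π / ρ`, and interpolating between `L^∞` and `L¹`
gives `ρ^(-2 - 1/p)`.
-/

noncomputable def sinhMonomial (φ : 𝓢(ℝ, ℝ)) (i l j : ℕ) (s : ℤ) (r y : ℝ) : ℝ :=
  r ^ s * sinh y ^ i * cosh y ^ l * (1 + cosh y)⁻¹ ^ j * φ (r * sinh y)

def sinhMonomialSpan (d : ℤ) : Submodule ℝ (ℝ → ℝ → ℝ) :=
  Submodule.span ℝ {F | ∃ φ i l j s, s ≤ d ∧ F = sinhMonomial φ i l j s}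

lemma sinhMonomial_mem_sinhMonomialSpan {φ : 𝓢(ℝ, ℝ)} {i l j : ℕ} {s d : ℤ} (hs : s ≤ d) :
    sinhMonomial φ i l j s ∈ sinhMonomialSpan d :=
  Submodule.subset_span ⟨φ, i, l, j, s, hs, rfl⟩

lemma hasDerivAt_inv_one_add_cosh (y : ℝ) :
    HasDerivAt (fun y => (1 + cosh y)⁻¹) (-sinh y * (1 + cosh y)⁻¹ ^ 2) y := by
  have h : 1 + cosh y ≠ 0 := by positivity
  simpa only [inv_pow, div_eq_mul_inv] using ((hasDerivAt_cosh y).const_add 1).fun_inv h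

lemma hasDerivAt_sinhMonomial_snd (φ : 𝓢(ℝ, ℝ)) (i l j : ℕ) (s : ℤ) {r : ℝ} (hr : r ≠ 0)
    (y : ℝ) :
    HasDerivAt (sinhMonomial φ i l j s r)
      (i * sinhMonomial φ (i - 1) (l + 1) j s r y + l * sinhMonomial φ (i + 1) (l - 1) j s r y
        - j * sinhMonomial φ (i + 1) l (j + 1) s r y
        + sinhMonomial (SchwartzMap.derivCLM ℝ ℝ φ) i (l + 1) j (s + 1) r y) y := by
  have hφ := (φ.hasDerivAt (r * sinh y)).comp y ((hasDerivAt_sinh y).const_mul r)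
  refine ((((((hasDerivAt_sinh y).fun_pow i).const_mul (r ^ s)).fun_mul
    ((hasDerivAt_cosh y).fun_pow l)).fun_mul
      ((hasDerivAt_inv_one_add_cosh y).fun_pow j)).fun_mul hφ).congr_deriv ?_
  simp only [sinhMonomial, SchwartzMap.derivCLM_apply, zpow_add_one₀ hr, Function.comp_apply]
  -- `j * u ^ (j - 1) * u ^ 2 = j * u ^ (j + 1)` fails to be a ring identity only through `j - 1`
  rcases j with _ | j <;> simp only [Nat.cast_zero, Nat.cast_succ, Nat.add_sub_cancel] <;> ring

lemma hasDerivAt_sinhMonomial_fst (φ : 𝓢(ℝ, ℝ)) (i l j : ℕ) (s : ℤ) {r : ℝ} (hr : r ≠ 0)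
    (y : ℝ) :
    HasDerivAt (sinhMonomial φ i l j s · y)
      (s * sinhMonomial φ i l j (s - 1) r y
        + sinhMonomial (SchwartzMap.derivCLM ℝ ℝ φ) (i + 1) l j s r y) r := by
  have hφ := (φ.hasDerivAt (r * sinh y)).comp r (hasDerivAt_mul_const (sinh y))
  refine (((((hasDerivAt_zpow s r (.inl hr)).mul_const (sinh y ^ i)).mul_const
    (cosh y ^ l)).mul_const ((1 + cosh y)⁻¹ ^ j)).fun_mul hφ).congr_deriv ?_
  simp only [sinhMonomial, SchwartzMap.derivCLM_apply, Function.comp_apply]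
  ring

lemma exists_hasDerivAt_snd_of_mem {d : ℤ} {F : ℝ → ℝ → ℝ} (hF : F ∈ sinhMonomialSpan d) :
    ∃ F' ∈ sinhMonomialSpan (d + 1), ∀ r ≠ 0, ∀ y, HasDerivAt (F r) (F' r y) y := by
  induction hF using Submodule.span_induction with
  | mem F hF =>
    obtain ⟨φ, i, l, j, s, hs, rfl⟩ := hF
    refine ⟨(i : ℝ) • sinhMonomial φ (i - 1) (l + 1) j s
      + (l : ℝ) • sinhMonomial φ (i + 1) (l - 1) j s - (j : ℝ) • sinhMonomial φ (i + 1) l (j + 1) s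
      + sinhMonomial (SchwartzMap.derivCLM ℝ ℝ φ) i (l + 1) j (s + 1), ?_,
      fun r hr y => hasDerivAt_sinhMonomial_snd φ i l j s hr y⟩
    have hs' : s ≤ d + 1 := by omega
    have hs'' : s + 1 ≤ d + 1 := by omega
    exact add_mem (sub_mem (add_mem
      (Submodule.smul_mem _ _ (sinhMonomial_mem_sinhMonomialSpan hs'))
      (Submodule.smul_mem _ _ (sinhMonomial_mem_sinhMonomialSpan hs')))
      (Submodule.smul_mem _ _ (sinhMonomial_mem_sinhMonomialSpan hs')))
      (sinhMonomial_mem_sinhMonomialSpan hs'')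
  | zero => exact ⟨0, zero_mem _, fun r _ y => hasDerivAt_const y 0⟩
  | add F G _ _ hF hG =>
    obtain ⟨F', hF'mem, hF'⟩ := hF
    obtain ⟨G', hG'mem, hG'⟩ := hG
    exact ⟨F' + G', add_mem hF'mem hG'mem, fun r hr y => (hF' r hr y).add (hG' r hr y)⟩
  | smul c F _ hF =>
    obtain ⟨F', hF'mem, hF'⟩ := hF
    exact ⟨c • F', Submodule.smul_mem _ c hF'mem, fun r hr y => (hF' r hr y).const_mul c⟩

lemma exists_hasDerivAt_fst_of_mem {d : ℤ} {F : ℝ → ℝ → ℝ} (hF : F ∈ sinhMonomialSpan d) :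
    ∃ F' ∈ sinhMonomialSpan d, ∀ r ≠ 0, ∀ y, HasDerivAt (F · y) (F' r y) r := by
  induction hF using Submodule.span_induction with
  | mem F hF =>
    obtain ⟨φ, i, l, j, s, hs, rfl⟩ := hF
    refine ⟨(s : ℝ) • sinhMonomial φ i l j (s - 1)
      + sinhMonomial (SchwartzMap.derivCLM ℝ ℝ φ) (i + 1) l j s, ?_,
      fun r hr y => hasDerivAt_sinhMonomial_fst φ i l j s hr y⟩
    exact add_mem (Submodule.smul_mem _ _ (sinhMonomial_mem_sinhMonomialSpan (by omega)))
      (sinhMonomial_mem_sinhMonomialSpan hs)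
  | zero => exact ⟨0, zero_mem _, fun r _ y => hasDerivAt_const r 0⟩
  | add F G _ _ hF hG =>
    obtain ⟨F', hF'mem, hF'⟩ := hF
    obtain ⟨G', hG'mem, hG'⟩ := hG
    exact ⟨F' + G', add_mem hF'mem hG'mem, fun r hr y => (hF' r hr y).add (hG' r hr y)⟩
  | smul c F _ hF =>
    obtain ⟨F', hF'mem, hF'⟩ := hF
    exact ⟨c • F', Submodule.smul_mem _ c hF'mem, fun r hr y => (hF' r hr y).const_mul c⟩

lemma continuous_of_mem_sinhMonomialSpan {d : ℤ} {F : ℝ → ℝ → ℝ} (hF : F ∈ sinhMonomialSpan d)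
    {r : ℝ} (hr : r ≠ 0) : Continuous (F r) :=
  have ⟨_, _, hF'⟩ := exists_hasDerivAt_snd_of_mem hF
  continuous_iff_continuousAt.2 fun y => (hF' r hr y).continuousAt

lemma exists_iteratedDeriv_snd_eq {d : ℤ} {F : ℝ → ℝ → ℝ} (hF : F ∈ sinhMonomialSpan d)
    (m : ℕ) :
    ∃ F' ∈ sinhMonomialSpan (d + m), ∀ r ≠ 0, ∀ y, iteratedDeriv m (F r) y = F' r y := by
  induction m with
  | zero => exact ⟨F, by simpa using hF, fun r _ y => by simp⟩
  | succ m ih =>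
    obtain ⟨F', hF'mem, hF'⟩ := ih
    obtain ⟨F'', hF''mem, hF''⟩ := exists_hasDerivAt_snd_of_mem hF'mem
    refine ⟨F'', by rwa [Nat.cast_succ, ← add_assoc], fun r hr y => ?_⟩
    rw [iteratedDeriv_succ, funext (hF' r hr)]
    exact (hF'' r hr y).deriv

lemma exists_iteratedDeriv_fst_eq {d : ℤ} {F : ℝ → ℝ → ℝ} (hF : F ∈ sinhMonomialSpan d)
    (n : ℕ) : ∃ F' ∈ sinhMonomialSpan d, ∀ r > 0, ∀ y, iteratedDeriv n (F · y) r = F' r y := by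
  induction n with
  | zero => exact ⟨F, hF, fun r _ y => by simp⟩
  | succ n ih =>
    obtain ⟨F', hF'mem, hF'⟩ := ih
    obtain ⟨F'', hF''mem, hF''⟩ := exists_hasDerivAt_fst_of_mem hF'mem
    refine ⟨F'', hF''mem, fun r hr y => ?_⟩
    have hnear : iteratedDeriv n (F · y) =ᶠ[nhds r] (F' · y) :=
      Filter.eventually_of_mem (lt_mem_nhds hr) fun r hr => hF' r hr y
    rw [iteratedDeriv_succ, hnear.deriv_eq]
    exact (hF'' r hr.ne' y).deriv

lemma eLpNorm_le_eLpNorm_one_rpow_of_norm_le_one {α E : Type*} [MeasurableSpace α]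
    [NormedAddCommGroup E] {μ : Measure α} {f : α → E} (hf : ∀ x, ‖f x‖ ≤ 1) {p : ℝ≥0∞}
    (hp : 1 ≤ p) : eLpNorm f p μ ≤ eLpNorm f 1 μ ^ (1 / p.toReal) := by
  rcases eq_or_ne p ⊤ with rfl | hp_top
  · simpa using eLpNormEssSup_le_of_ae_bound (μ := μ) (.of_forall hf)
  have hq : 1 ≤ p.toReal := by simpa using ENNReal.toReal_mono hp_top hp
  rw [eLpNorm_eq_lintegral_rpow_enorm_toReal (by positivity) hp_top,
    eLpNorm_one_eq_lintegral_enorm]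
  gcongr with x
  refine ENNReal.rpow_le_self_of_le_one ?_ hq
  rw [← ofReal_norm]
  exact ENNReal.ofReal_le_one.mpr (hf x)

lemma SchwartzMap.exists_abs_le_div_one_add_abs_pow (φ : 𝓢(ℝ, ℝ)) (N : ℕ) :
    ∃ B > 0, ∀ x, |φ x| ≤ B / (1 + |x|) ^ N := by
  set B := 2 ^ N * (Finset.Iic (N, 0)).sup (fun m => SchwartzMap.seminorm ℝ m.1 m.2) φ
  refine ⟨B + 1, by positivity, fun x => ?_⟩
  have h : (1 + |x|) ^ N * |φ x| ≤ B := by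
    simpa using one_add_le_sup_seminorm_apply (𝕜 := ℝ) (m := (N, 0)) le_rfl le_rfl φ x
  rw [le_div_iff₀' (by positivity)]
  linarith

lemma cosh_le_one_add_abs_sinh (y : ℝ) : cosh y ≤ 1 + |sinh y| := by
  nlinarith [cosh_sq y, cosh_pos y, abs_nonneg (sinh y), sq_abs (sinh y)]

/-- `ρ * sinhWeight ρ` is the pullback of the Cauchy density `(1 + x²)⁻¹` under
`x = ρ sinh y`. -/
noncomputable def sinhWeight (ρ y : ℝ) : ℝ := cosh y * (1 + (ρ * sinh y) ^ 2)⁻¹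

lemma sinhWeight_nonneg (ρ y : ℝ) : 0 ≤ sinhWeight ρ y := by
  have := cosh_pos y
  unfold sinhWeight
  positivity

lemma sinhWeight_le_one {ρ : ℝ} (hρ : 1 ≤ ρ) (y : ℝ) : sinhWeight ρ y ≤ 1 := by
  rw [sinhWeight, ← div_eq_mul_inv, div_le_one (by positivity)]
  have h1 : cosh y ≤ cosh y ^ 2 := by nlinarith [one_le_cosh y]
  have h2 : sinh y ^ 2 ≤ (ρ * sinh y) ^ 2 := by
    rw [mul_pow]
    exact le_mul_of_one_le_left (sq_nonneg _) (one_le_pow₀ hρ)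
  linarith [cosh_sq y]

lemma eLpNorm_one_sinhWeight {ρ : ℝ} (hρ : 0 < ρ) :
    eLpNorm (sinhWeight ρ) 1 volume = ENNReal.ofReal (π / ρ) := by
  have hinj : Set.InjOn (fun y => ρ * sinh y) Set.univ := fun a _ b _ h =>
    sinh_injective (mul_left_cancel₀ hρ.ne' h)
  have himage : (fun y => ρ * sinh y) '' Set.univ = Set.univ := by
    rw [Set.image_univ, Set.range_eq_univ]
    exact fun x => ⟨arsinh (x / ρ), by simp [sinh_arsinh, mul_div_cancel₀ x hρ.ne']⟩
  have h := lintegral_image_eq_lintegral_abs_deriv_mul MeasurableSet.univ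
    (fun y _ => ((hasDerivAt_sinh y).const_mul ρ).hasDerivWithinAt) hinj
    (fun x => ENNReal.ofReal (1 + x ^ 2)⁻¹)
  rw [himage, Measure.restrict_univ,
    ← ofReal_integral_eq_lintegral_ofReal integrable_inv_one_add_sq
      (.of_forall fun x => by positivity), integral_univ_inv_one_add_sq] at h
  have hfactor : ∀ y, ENNReal.ofReal |ρ * cosh y| * ENNReal.ofReal (1 + (ρ * sinh y) ^ 2)⁻¹
      = ENNReal.ofReal ρ * ‖sinhWeight ρ y‖ₑ := fun y => by
    rw [Real.enorm_of_nonneg (sinhWeight_nonneg ρ y), abs_of_pos (by positivity),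
      ← ENNReal.ofReal_mul hρ.le, ← ENNReal.ofReal_mul (by positivity), sinhWeight, mul_assoc]
  simp_rw [hfactor] at h
  rw [lintegral_const_mul' _ _ ENNReal.ofReal_ne_top] at h
  rw [eLpNorm_one_eq_lintegral_enorm, ENNReal.ofReal_div_of_pos hρ,
    ENNReal.eq_div_iff (by simpa using hρ) ENNReal.ofReal_ne_top, h]

lemma abs_sinhMonomial_le (φ : 𝓢(ℝ, ℝ)) (i l j : ℕ) {s : ℤ} (hs : s ≤ -2) :
    ∃ B > 0, ∀ ρ, 1 ≤ ρ → ∀ y,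
      |sinhMonomial φ i l j s ρ y| ≤ B * (ρ ^ 2)⁻¹ * sinhWeight ρ y := by
  obtain ⟨B, hB, hφ⟩ := φ.exists_abs_le_div_one_add_abs_pow (i + l + 2)
  refine ⟨B, hB, fun ρ hρ y => ?_⟩
  have hρ₀ : 0 < ρ := by linarith
  have hx : |ρ * sinh y| = ρ * |sinh y| := by rw [abs_mul, abs_of_pos hρ₀]
  have hsinh : |sinh y| ≤ 1 + |ρ * sinh y| := by rw [hx]; nlinarith [abs_nonneg (sinh y)]
  have hcosh : cosh y ≤ 1 + |ρ * sinh y| :=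
    (cosh_le_one_add_abs_sinh y).trans (by rw [hx]; nlinarith [abs_nonneg (sinh y)])
  have hweight : ((1 + |ρ * sinh y|) ^ 2)⁻¹ ≤ sinhWeight ρ y := by
    refine (inv_anti₀ (by positivity) ?_).trans
      (le_mul_of_one_le_left (by positivity) (one_le_cosh y))
    nlinarith [sq_abs (ρ * sinh y), abs_nonneg (ρ * sinh y)]
  set X := 1 + |ρ * sinh y|
  have hX : 0 < X := by positivity
  have hρs : ρ ^ s ≤ (ρ ^ 2)⁻¹ := by
    rw [← zpow_natCast, ← zpow_neg]
    exact zpow_le_zpow_right₀ hρ hs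
  have hj : (1 + cosh y)⁻¹ ^ j ≤ 1 :=
    pow_le_one₀ (by positivity) (inv_le_one_of_one_le₀ (by linarith [one_le_cosh y]))
  calc |sinhMonomial φ i l j s ρ y|
      = ρ ^ s * |sinh y| ^ i * cosh y ^ l * (1 + cosh y)⁻¹ ^ j * |φ (ρ * sinh y)| := by
        simp only [sinhMonomial, abs_mul, abs_pow, abs_of_pos (zpow_pos hρ₀ s),
          abs_of_pos (cosh_pos y), abs_inv, abs_of_pos (by positivity : 0 < 1 + cosh y)]
    _ ≤ (ρ ^ 2)⁻¹ * X ^ i * X ^ l * 1 * (B / X ^ (i + l + 2)) := by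
        gcongr
        exact hφ _
    _ = B * (ρ ^ 2)⁻¹ * (X ^ 2)⁻¹ := by
        field_simp
        ring
    _ ≤ B * (ρ ^ 2)⁻¹ * sinhWeight ρ y := by gcongr

lemma eLpNorm_sinhMonomial_le (φ : 𝓢(ℝ, ℝ)) (i l j : ℕ) {s : ℤ} (hs : s ≤ -2) {p : ℝ≥0∞}
    (hp : 1 ≤ p) : ∃ C > 0, ∀ ρ, 1 ≤ ρ →
      eLpNorm (sinhMonomial φ i l j s ρ) p volume
        ≤ ENNReal.ofReal (C * ρ ^ (-2 - 1 / p.toReal)) := by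
  obtain ⟨B, hB, hbound⟩ := abs_sinhMonomial_le φ i l j hs
  set u := 1 / p.toReal
  refine ⟨B * π ^ u, by positivity, fun ρ hρ => ?_⟩
  have hρ₀ : 0 < ρ := by linarith
  have hweight : eLpNorm (sinhWeight ρ) p volume ≤ ENNReal.ofReal (π / ρ) ^ u := by
    rw [← eLpNorm_one_sinhWeight hρ₀]
    refine eLpNorm_le_eLpNorm_one_rpow_of_norm_le_one (fun y => ?_) hp
    rw [Real.norm_of_nonneg (sinhWeight_nonneg ρ y)]
    exact sinhWeight_le_one hρ y
  calc eLpNorm (sinhMonomial φ i l j s ρ) p volume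
      ≤ eLpNorm ((B * (ρ ^ 2)⁻¹) • sinhWeight ρ) p volume :=
        eLpNorm_mono_real fun y => hbound ρ hρ y
    _ = ENNReal.ofReal (B * (ρ ^ 2)⁻¹) * eLpNorm (sinhWeight ρ) p volume := by
        rw [eLpNorm_const_smul, Real.enorm_of_nonneg (by positivity)]
    _ ≤ ENNReal.ofReal (B * (ρ ^ 2)⁻¹) * ENNReal.ofReal (π / ρ) ^ u := by gcongr
    _ = ENNReal.ofReal (B * π ^ u * ρ ^ (-2 - u)) := by
        rw [ENNReal.ofReal_rpow_of_nonneg (by positivity) (by positivity),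
          ← ENNReal.ofReal_mul (by positivity), div_rpow pi_pos.le hρ₀.le, rpow_sub hρ₀,
          rpow_neg hρ₀.le, rpow_two]
        ring_nf

lemma exists_eLpNorm_le_of_mem_sinhMonomialSpan {F : ℝ → ℝ → ℝ}
    (hF : F ∈ sinhMonomialSpan (-2)) {p : ℝ≥0∞} (hp : 1 ≤ p) :
    ∃ C > 0, ∀ ρ, 1 ≤ ρ →
      eLpNorm (F ρ) p volume ≤ ENNReal.ofReal (C * ρ ^ (-2 - 1 / p.toReal)) := by
  induction hF using Submodule.span_induction with
  | mem F hF =>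
    obtain ⟨φ, i, l, j, s, hs, rfl⟩ := hF
    exact eLpNorm_sinhMonomial_le φ i l j hs hp
  | zero => exact ⟨1, one_pos, fun ρ _ => by simp⟩
  | add F G hFmem hGmem hF hG =>
    obtain ⟨C₁, hC₁, hF⟩ := hF
    obtain ⟨C₂, hC₂, hG⟩ := hG
    refine ⟨C₁ + C₂, by positivity, fun ρ hρ => ?_⟩
    have hρ₀ : ρ ≠ 0 := by positivity
    calc eLpNorm ((F + G) ρ) p volume ≤ eLpNorm (F ρ) p volume + eLpNorm (G ρ) p volume :=
          eLpNorm_add_le (continuous_of_mem_sinhMonomialSpan hFmem hρ₀).aestronglyMeasurable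
            (continuous_of_mem_sinhMonomialSpan hGmem hρ₀).aestronglyMeasurable hp
      _ ≤ ENNReal.ofReal (C₁ * ρ ^ (-2 - 1 / p.toReal))
          + ENNReal.ofReal (C₂ * ρ ^ (-2 - 1 / p.toReal)) := add_le_add (hF ρ hρ) (hG ρ hρ)
      _ = ENNReal.ofReal ((C₁ + C₂) * ρ ^ (-2 - 1 / p.toReal)) := by
          rw [← ENNReal.ofReal_add (by positivity) (by positivity), add_mul]
  | smul c F _ hF =>
    obtain ⟨C, hC, hF⟩ := hF
    refine ⟨(|c| + 1) * C, by positivity, fun ρ hρ => ?_⟩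
    calc eLpNorm ((c • F) ρ) p volume = ‖c‖ₑ * eLpNorm (F ρ) p volume :=
          eLpNorm_const_smul c _ p _
      _ ≤ ENNReal.ofReal |c| * ENNReal.ofReal (C * ρ ^ (-2 - 1 / p.toReal)) := by
          rw [← ofReal_norm, Real.norm_eq_abs]
          gcongr
          exact hF ρ hρ
      _ ≤ ENNReal.ofReal ((|c| + 1) * C * ρ ^ (-2 - 1 / p.toReal)) := by
          rw [← ENNReal.ofReal_mul (abs_nonneg c), mul_assoc]
          gcongr
          linarith

/-- estimate for `G(ρ,y) = ρ^{-2}(1+cosh y)^{-1} ψ(ρ sinh y)`: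
`‖∂_ρ^n (ρ^{-m} ∂_y^m G)‖_{L^p_y} ≤ C ρ^{-2-1/p}`. -/
theorem stmt_6 (ψ : SchwartzMap ℝ ℝ) (n m : ℕ) (p : ℝ≥0∞) (hp : 1 ≤ p) :
    ∃ C : ℝ, 0 < C ∧ ∀ ρ : ℝ, 1 ≤ ρ →
      eLpNorm (fun y : ℝ =>
          iteratedDeriv n (fun r : ℝ =>
            (r ^ m)⁻¹ *
              iteratedDeriv m
                (fun z : ℝ => (r ^ 2)⁻¹ * (1 + Real.cosh z)⁻¹ * ψ (r * Real.sinh z)) y) ρ)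
        p volume
      ≤ ENNReal.ofReal (C * ρ ^ (-2 - 1 / p.toReal)) := by
  have hG : ∀ r z, (r ^ m)⁻¹ * ((r ^ 2)⁻¹ * (1 + cosh z)⁻¹ * ψ (r * sinh z))
      = sinhMonomial ψ 0 0 1 (-(m + 2)) r z := fun r z => by
    rw [sinhMonomial, show -((m : ℤ) + 2) = -((m + 2 : ℕ) : ℤ) by push_cast; ring, zpow_neg,
      zpow_natCast, pow_add, mul_inv]
    ring
  obtain ⟨F, hFmem, hF⟩ := exists_iteratedDeriv_snd_eq (sinhMonomial_mem_sinhMonomialSpan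
    (φ := ψ) (i := 0) (l := 0) (j := 1) (le_refl (-(m + 2 : ℤ)))) m
  obtain ⟨F', hF'mem, hF'⟩ :=
    exists_iteratedDeriv_fst_eq (d := -2) (by convert hFmem using 2; ring) n
  obtain ⟨C, hC, hbound⟩ := exists_eLpNorm_le_of_mem_sinhMonomialSpan hF'mem hp
  refine ⟨C, hC, fun ρ hρ => ?_⟩
  have hρ₀ : 0 < ρ := by linarith
  convert hbound ρ hρ using 2
  ext y
  rw [← hF' ρ hρ₀ y]
  refine Filter.EventuallyEq.iteratedDeriv_eq n
    (Filter.eventually_of_mem (lt_mem_nhds hρ₀) fun r hr => ?_)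
  beta_reduce
  rw [← iteratedDeriv_const_mul_field]
  simp only [hG]
  exact hF r hr.ne' y
end

section
/- Let f₁, f₂, f₃, f₄, β₁ : (0,∞) × ℝ → ℝ be smooth functions of (ρ, y). Define F₁ = 3f₁ + f₃, F₂ = f₁ − f₃, G₁ = f₂ + 3f₄, G₂ = f₂ − f₄, and the complex functions K₁ = e^{iρ}(F₁ + i G₁), K₂ = e^{3iρ}(F₂ + i G₂). Write □_H g = ∂_ρ²g − ρ^{−2}∂_y²g + (1/4)ρ^{−2}g (applied componentwise to complex functions). Then the following two conditions are equivalent: (i) the system E1: □_H f₁ − 2f₁ − 2∂_ρf₂ + 2f₃ = β₁; E2: □_H f₂ − 6f₂ + 6∂_ρf₁ − 4∂_ρf₃ + 6f₄ = 0; E3: □_H f₃ − 6f₃ + 6f₁ + 4∂_ρf₂ − 6∂_ρf₄ = 0; E4: □_H f₄ − 2f₄ + 2f₂ + 2∂_ρf₃ = 0 holds on (0,∞) × ℝ; (ii) one has (□_H + 1)K₁ = 3 e^{iρ} β₁ and (□_H + 1)K₂ = e^{3iρ} β₁ on (0,∞) × ℝ. -/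
open Real MeasureTheory

/-- The hyperbolic d'Alembertian `□_H g = ∂_ρ²g - ρ^{-2}∂_y²g + (1/4)ρ^{-2}g`
for real valued functions. -/
noncomputable def BoxHR (f : ℝ → ℝ → ℝ) (ρ y : ℝ) : ℝ :=
  iteratedDeriv 2 (fun r => f r y) ρ - (ρ ^ 2)⁻¹ * iteratedDeriv 2 (fun z => f ρ z) y
    + (1 / 4) * (ρ ^ 2)⁻¹ * f ρ y

/-- The hyperbolic d'Alembertian `□_H g = ∂_ρ²g - ρ^{-2}∂_y²g + (1/4)ρ^{-2}g`
applied componentwise to complex valued functions. -/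
noncomputable def BoxHC (f : ℝ → ℝ → ℂ) (ρ y : ℝ) : ℂ :=
  iteratedDeriv 2 (fun r => f r y) ρ - ((ρ : ℂ) ^ 2)⁻¹ * iteratedDeriv 2 (fun z => f ρ z) y
    + (1 / 4) * ((ρ : ℂ) ^ 2)⁻¹ * f ρ y

/-- `K₁ = e^{iρ}(F₁ + iG₁)` with `F₁ = 3f₁ + f₃`, `G₁ = f₂ + 3f₄`. -/
noncomputable def Ksym1 (f₁ f₂ f₃ f₄ : ℝ → ℝ → ℝ) (ρ y : ℝ) : ℂ :=
  Complex.exp (Complex.I * (ρ : ℂ)) *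
    (((3 * f₁ ρ y + f₃ ρ y : ℝ) : ℂ) + Complex.I * ((f₂ ρ y + 3 * f₄ ρ y : ℝ) : ℂ))

/-- `K₂ = e^{3iρ}(F₂ + iG₂)` with `F₂ = f₁ - f₃`, `G₂ = f₂ - f₄`. -/
noncomputable def Ksym2 (f₁ f₂ f₃ f₄ : ℝ → ℝ → ℝ) (ρ y : ℝ) : ℂ :=
  Complex.exp (3 * Complex.I * (ρ : ℂ)) *
    (((f₁ ρ y - f₃ ρ y : ℝ) : ℂ) + Complex.I * ((f₂ ρ y - f₄ ρ y : ℝ) : ℂ))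

open Filter Topology in
private lemma sliceRho19 {F : ℝ → ℝ → ℝ}
    (hF : ContDiffOn ℝ (⊤ : ℕ∞) (Function.uncurry F) {p : ℝ × ℝ | 0 < p.1})
    {r : ℝ} (hr : 0 < r) (y : ℝ) : ContDiffAt ℝ (⊤ : ℕ∞) (fun s => F s y) r := by
  have h1 : ContDiffAt ℝ (⊤ : ℕ∞) (Function.uncurry F) (r, y) :=
    hF.contDiffAt ((isOpen_lt continuous_const continuous_fst).mem_nhds hr)
  exact h1.comp r (contDiffAt_id.prodMk contDiffAt_const)

open Filter Topology in
private lemma sliceY19 {F : ℝ → ℝ → ℝ}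
    (hF : ContDiffOn ℝ (⊤ : ℕ∞) (Function.uncurry F) {p : ℝ × ℝ | 0 < p.1})
    {r : ℝ} (hr : 0 < r) (y : ℝ) : ContDiffAt ℝ (⊤ : ℕ∞) (fun z => F r z) y := by
  have h1 : ContDiffAt ℝ (⊤ : ℕ∞) (Function.uncurry F) (r, y) :=
    hF.contDiffAt ((isOpen_lt continuous_const continuous_fst).mem_nhds hr)
  exact h1.comp y (contDiffAt_const.prodMk contDiffAt_id)

open Filter Topology in
private lemma hasDerivAt_deriv_of_ev19 {g : ℝ → ℝ} {ρ : ℝ}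
    (h : ∀ᶠ r in 𝓝 ρ, ContDiffAt ℝ (⊤ : ℕ∞) g r) :
    HasDerivAt (deriv g) (iteratedDeriv 2 g ρ) ρ := by
  obtain ⟨u, hu, huo, hρu⟩ := eventually_nhds_iff.1 h
  have hco : ContDiffOn ℝ (⊤ : ℕ∞) g u := fun x hx => ((hu x hx).contDiffWithinAt)
  have hd : ContDiffOn ℝ 1 (deriv g) u := hco.deriv_of_isOpen huo (WithTop.coe_le_coe.2 le_top)
  have : DifferentiableAt ℝ (deriv g) ρ :=
    (hd.differentiableOn one_ne_zero).differentiableAt (huo.mem_nhds hρu)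
  simpa [iteratedDeriv_succ, iteratedDeriv_one] using this.hasDerivAt

open Filter Topology in
private lemma deriv2_of_eventually19 {E : Type*} [NormedAddCommGroup E] [NormedSpace ℝ E]
    {h h1 : ℝ → E} {h2 : E} {ρ : ℝ}
    (H1 : ∀ᶠ r in 𝓝 ρ, HasDerivAt h (h1 r) r)
    (H2 : HasDerivAt h1 h2 ρ) :
    iteratedDeriv 2 h ρ = h2 := by
  have e : deriv h =ᶠ[𝓝 ρ] h1 := H1.mono fun r hr => hr.deriv
  rw [show (2:ℕ) = 1+1 from rfl, iteratedDeriv_succ, iteratedDeriv_one, e.deriv_eq]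
  exact H2.deriv

private lemma deriv_lin19 (a b : ℝ) (F G : ℝ → ℝ → ℝ)
    (hF : ContDiffOn ℝ (⊤ : ℕ∞) (Function.uncurry F) {p : ℝ × ℝ | 0 < p.1})
    (hG : ContDiffOn ℝ (⊤ : ℕ∞) (Function.uncurry G) {p : ℝ × ℝ | 0 < p.1})
    {ρ : ℝ} (hρ : 0 < ρ) (y : ℝ) :
    deriv (fun r => a * F r y + b * G r y) ρ
      = a * deriv (fun r => F r y) ρ + b * deriv (fun r => G r y) ρ :=
  ((HasDerivAt.const_mul a ((sliceRho19 hF hρ y).differentiableAt (by simp)).hasDerivAt).add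
    (HasDerivAt.const_mul b ((sliceRho19 hG hρ y).differentiableAt (by simp)).hasDerivAt)).deriv

open Filter Topology in
private lemma boxR_lin19 (a b : ℝ) (F G : ℝ → ℝ → ℝ)
    (hF : ContDiffOn ℝ (⊤ : ℕ∞) (Function.uncurry F) {p : ℝ × ℝ | 0 < p.1})
    (hG : ContDiffOn ℝ (⊤ : ℕ∞) (Function.uncurry G) {p : ℝ × ℝ | 0 < p.1})
    {ρ : ℝ} (hρ : 0 < ρ) (y : ℝ) :
    BoxHR (fun r z => a * F r z + b * G r z) ρ y = a * BoxHR F ρ y + b * BoxHR G ρ y := by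
  have hrho : iteratedDeriv 2 (fun r => a * F r y + b * G r y) ρ
      = a * iteratedDeriv 2 (fun s => F s y) ρ + b * iteratedDeriv 2 (fun s => G s y) ρ := by
    refine deriv2_of_eventually19 (h1 := fun r => a * deriv (fun s => F s y) r
        + b * deriv (fun s => G s y) r) ?_ ?_
    · filter_upwards [eventually_gt_nhds hρ] with r hr
      exact (HasDerivAt.const_mul a ((sliceRho19 hF hr y).differentiableAt (by simp)).hasDerivAt).add
        (HasDerivAt.const_mul b ((sliceRho19 hG hr y).differentiableAt (by simp)).hasDerivAt)
    · exact (HasDerivAt.const_mul a (hasDerivAt_deriv_of_ev19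
          ((eventually_gt_nhds hρ).mono fun r hr => sliceRho19 hF hr y))).add
        (HasDerivAt.const_mul b (hasDerivAt_deriv_of_ev19
          ((eventually_gt_nhds hρ).mono fun r hr => sliceRho19 hG hr y)))
  have hy : iteratedDeriv 2 (fun z => a * F ρ z + b * G ρ z) y
      = a * iteratedDeriv 2 (fun t => F ρ t) y + b * iteratedDeriv 2 (fun t => G ρ t) y := by
    refine deriv2_of_eventually19 (h1 := fun z => a * deriv (fun t => F ρ t) z
        + b * deriv (fun t => G ρ t) z) ?_ ?_
    · refine Eventually.of_forall fun z => ?_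
      exact (HasDerivAt.const_mul a ((sliceY19 hF hρ z).differentiableAt (by simp)).hasDerivAt).add
        (HasDerivAt.const_mul b ((sliceY19 hG hρ z).differentiableAt (by simp)).hasDerivAt)
    · exact (HasDerivAt.const_mul a (hasDerivAt_deriv_of_ev19
          (Eventually.of_forall fun z => sliceY19 hF hρ z))).add
        (HasDerivAt.const_mul b (hasDerivAt_deriv_of_ev19
          (Eventually.of_forall fun z => sliceY19 hG hρ z)))
  rw [BoxHR, BoxHR, BoxHR, hrho, hy]
  ring

private lemma contDiffOn_lin19 (a b : ℝ) (F G : ℝ → ℝ → ℝ)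
    (hF : ContDiffOn ℝ (⊤ : ℕ∞) (Function.uncurry F) {p : ℝ × ℝ | 0 < p.1})
    (hG : ContDiffOn ℝ (⊤ : ℕ∞) (Function.uncurry G) {p : ℝ × ℝ | 0 < p.1}) :
    ContDiffOn ℝ (⊤ : ℕ∞) (Function.uncurry (fun r z => a * F r z + b * G r z))
      {p : ℝ × ℝ | 0 < p.1} := by
  have : Function.uncurry (fun r z => a * F r z + b * G r z)
      = fun p => a * Function.uncurry F p + b * Function.uncurry G p := rfl
  rw [this]
  exact (contDiffOn_const.mul hF).add (contDiffOn_const.mul hG)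

open Filter Topology in
private lemma hasDerivAt_cexp_lin19 (c : ℝ) (r : ℝ) :
    HasDerivAt (fun s : ℝ => Complex.exp ((c:ℂ) * Complex.I * s))
      (Complex.exp ((c:ℂ) * Complex.I * r) * ((c:ℂ) * Complex.I)) r := by
  have h0 : HasDerivAt (fun s : ℝ => (c:ℂ) * Complex.I * (s:ℂ)) ((c:ℂ) * Complex.I) r := by
    simpa using (HasDerivAt.const_mul ((c:ℂ) * Complex.I) (Complex.ofRealCLM.hasDerivAt (x := r)))
  simpa using h0.cexp

open Filter Topology in
private lemma boxC_formula19 (c : ℝ) (F G : ℝ → ℝ → ℝ)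
    (hF : ContDiffOn ℝ (⊤ : ℕ∞) (Function.uncurry F) {p : ℝ × ℝ | 0 < p.1})
    (hG : ContDiffOn ℝ (⊤ : ℕ∞) (Function.uncurry G) {p : ℝ × ℝ | 0 < p.1})
    {ρ : ℝ} (hρ : 0 < ρ) (y : ℝ) :
    BoxHC (fun r z => Complex.exp ((c:ℂ) * Complex.I * r) *
        (((F r z : ℝ):ℂ) + Complex.I * ((G r z : ℝ):ℂ))) ρ y
    = Complex.exp ((c:ℂ) * Complex.I * ρ) *
      (((BoxHR F ρ y - c^2 * F ρ y - 2*c*deriv (fun r => G r y) ρ : ℝ) : ℂ)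
        + Complex.I * ((BoxHR G ρ y - c^2 * G ρ y + 2*c*deriv (fun r => F r y) ρ : ℝ) : ℂ)) := by
  have hFd : ∀ r, 0 < r → HasDerivAt (fun s => F s y) (deriv (fun s => F s y) r) r :=
    fun r hr => ((sliceRho19 hF hr y).differentiableAt (by simp)).hasDerivAt
  have hGd : ∀ r, 0 < r → HasDerivAt (fun s => G s y) (deriv (fun s => G s y) r) r :=
    fun r hr => ((sliceRho19 hG hr y).differentiableAt (by simp)).hasDerivAt
  set dF := deriv (fun s => F s y) with hdF
  set dG := deriv (fun s => G s y) with hdG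
  set F2 := iteratedDeriv 2 (fun s => F s y) ρ with hF2
  set G2 := iteratedDeriv 2 (fun s => G s y) ρ with hG2
  have evF : HasDerivAt dF F2 ρ :=
    hasDerivAt_deriv_of_ev19 ((eventually_gt_nhds hρ).mono fun r hr => sliceRho19 hF hr y)
  have evG : HasDerivAt dG G2 ρ :=
    hasDerivAt_deriv_of_ev19 ((eventually_gt_nhds hρ).mono fun r hr => sliceRho19 hG hr y)
  -- rho part
  have H1 : ∀ᶠ (r : ℝ) in 𝓝 ρ, HasDerivAt
      (fun r : ℝ => Complex.exp ((c:ℂ) * Complex.I * (r:ℂ)) *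
        (((F r y : ℝ):ℂ) + Complex.I * ((G r y : ℝ):ℂ)))
      (Complex.exp ((c:ℂ) * Complex.I * (r:ℂ)) *
        ((c:ℂ) * Complex.I * (((F r y : ℝ):ℂ) + Complex.I * ((G r y : ℝ):ℂ))
          + (((dF r : ℝ):ℂ) + Complex.I * ((dG r : ℝ):ℂ)))) r := by
    filter_upwards [eventually_gt_nhds hρ] with r hr
    have h := (hasDerivAt_cexp_lin19 c r).mul
      (((hFd r hr).ofReal_comp).add (((hGd r hr).ofReal_comp).const_mul Complex.I))
    exact h.congr_deriv (by simp only [Pi.add_apply]; ring)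
  have H2 : HasDerivAt
      (fun r : ℝ => Complex.exp ((c:ℂ) * Complex.I * (r:ℂ)) *
        ((c:ℂ) * Complex.I * (((F r y : ℝ):ℂ) + Complex.I * ((G r y : ℝ):ℂ))
          + (((dF r : ℝ):ℂ) + Complex.I * ((dG r : ℝ):ℂ))))
      (Complex.exp ((c:ℂ) * Complex.I * ρ) *
        ((c:ℂ) * Complex.I *
            ((c:ℂ) * Complex.I * (((F ρ y : ℝ):ℂ) + Complex.I * ((G ρ y : ℝ):ℂ))
              + (((dF ρ : ℝ):ℂ) + Complex.I * ((dG ρ : ℝ):ℂ)))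
          + ((c:ℂ) * Complex.I * (((dF ρ : ℝ):ℂ) + Complex.I * ((dG ρ : ℝ):ℂ))
              + (((F2 : ℝ):ℂ) + Complex.I * ((G2 : ℝ):ℂ))))) ρ := by
    have hval : HasDerivAt (fun r : ℝ => (((F r y : ℝ):ℂ) + Complex.I * ((G r y : ℝ):ℂ)))
        (((dF ρ : ℝ):ℂ) + Complex.I * ((dG ρ : ℝ):ℂ)) ρ :=
      ((hFd ρ hρ).ofReal_comp).add (((hGd ρ hρ).ofReal_comp).const_mul Complex.I)
    have hder : HasDerivAt (fun r : ℝ => (((dF r : ℝ):ℂ) + Complex.I * ((dG r : ℝ):ℂ)))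
        (((F2 : ℝ):ℂ) + Complex.I * ((G2 : ℝ):ℂ)) ρ :=
      (evF.ofReal_comp).add ((evG.ofReal_comp).const_mul Complex.I)
    have h := (hasDerivAt_cexp_lin19 c ρ).mul
      ((hval.const_mul ((c:ℂ) * Complex.I)).add hder)
    exact h.congr_deriv (by simp only [Pi.add_apply]; ring)
  have hrho : iteratedDeriv 2 (fun r : ℝ => Complex.exp ((c:ℂ) * Complex.I * (r:ℂ)) *
        (((F r y : ℝ):ℂ) + Complex.I * ((G r y : ℝ):ℂ))) ρ =
      Complex.exp ((c:ℂ) * Complex.I * ρ) *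
        ((c:ℂ) * Complex.I *
            ((c:ℂ) * Complex.I * (((F ρ y : ℝ):ℂ) + Complex.I * ((G ρ y : ℝ):ℂ))
              + (((dF ρ : ℝ):ℂ) + Complex.I * ((dG ρ : ℝ):ℂ)))
          + ((c:ℂ) * Complex.I * (((dF ρ : ℝ):ℂ) + Complex.I * ((dG ρ : ℝ):ℂ))
              + (((F2 : ℝ):ℂ) + Complex.I * ((G2 : ℝ):ℂ)))) :=
    deriv2_of_eventually19 H1 H2
  -- y part
  have hFdy : ∀ z, HasDerivAt (fun t => F ρ t) (deriv (fun t => F ρ t) z) z :=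
    fun z => ((sliceY19 hF hρ z).differentiableAt (by simp)).hasDerivAt
  have hGdy : ∀ z, HasDerivAt (fun t => G ρ t) (deriv (fun t => G ρ t) z) z :=
    fun z => ((sliceY19 hG hρ z).differentiableAt (by simp)).hasDerivAt
  set dFy := deriv (fun t => F ρ t) with hdFy
  set dGy := deriv (fun t => G ρ t) with hdGy
  set Fyy := iteratedDeriv 2 (fun t => F ρ t) y with hFyy
  set Gyy := iteratedDeriv 2 (fun t => G ρ t) y with hGyy
  have evFy : HasDerivAt dFy Fyy y :=
    hasDerivAt_deriv_of_ev19 (Eventually.of_forall fun z => sliceY19 hF hρ z)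
  have evGy : HasDerivAt dGy Gyy y :=
    hasDerivAt_deriv_of_ev19 (Eventually.of_forall fun z => sliceY19 hG hρ z)
  have H1y : ∀ᶠ z in 𝓝 y, HasDerivAt
      (fun z : ℝ => Complex.exp ((c:ℂ) * Complex.I * ρ) *
        (((F ρ z : ℝ):ℂ) + Complex.I * ((G ρ z : ℝ):ℂ)))
      (Complex.exp ((c:ℂ) * Complex.I * ρ) *
        (((dFy z : ℝ):ℂ) + Complex.I * ((dGy z : ℝ):ℂ))) z := by
    refine Eventually.of_forall fun z => ?_
    exact (((hFdy z).ofReal_comp).add (((hGdy z).ofReal_comp).const_mul Complex.I)).const_mul _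
  have H2y : HasDerivAt
      (fun z : ℝ => Complex.exp ((c:ℂ) * Complex.I * ρ) *
        (((dFy z : ℝ):ℂ) + Complex.I * ((dGy z : ℝ):ℂ)))
      (Complex.exp ((c:ℂ) * Complex.I * ρ) *
        (((Fyy : ℝ):ℂ) + Complex.I * ((Gyy : ℝ):ℂ))) y :=
    ((evFy.ofReal_comp).add ((evGy.ofReal_comp).const_mul Complex.I)).const_mul _
  have hyy : iteratedDeriv 2 (fun z : ℝ => Complex.exp ((c:ℂ) * Complex.I * ρ) *
        (((F ρ z : ℝ):ℂ) + Complex.I * ((G ρ z : ℝ):ℂ))) y =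
      Complex.exp ((c:ℂ) * Complex.I * ρ) *
        (((Fyy : ℝ):ℂ) + Complex.I * ((Gyy : ℝ):ℂ)) :=
    deriv2_of_eventually19 H1y H2y
  -- assemble
  rw [BoxHC]
  rw [hrho, hyy, BoxHR, BoxHR]
  have hI : Complex.I * Complex.I = -1 := Complex.I_mul_I
  push_cast
  linear_combination (Complex.exp ((c:ℂ) * Complex.I * ρ) *
    ((c:ℂ)^2 * ((F ρ y : ℝ):ℂ) + 2*(c:ℂ)*((dG ρ : ℝ):ℂ)
      + Complex.I * ((c:ℂ)^2 * ((G ρ y : ℝ):ℂ)))) * hI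

/-- the system E1–E4 for the cubic normal form coefficients is
equivalent to the two complexified resonance equations
`(□_H+1)K₁ = 3e^{iρ}β₁` and `(□_H+1)K₂ = e^{3iρ}β₁`. -/
theorem stmt_19 (f₁ f₂ f₃ f₄ β₁ : ℝ → ℝ → ℝ)
    (hf₁ : ContDiffOn ℝ (⊤ : ℕ∞) (Function.uncurry f₁) {p : ℝ × ℝ | 0 < p.1})
    (hf₂ : ContDiffOn ℝ (⊤ : ℕ∞) (Function.uncurry f₂) {p : ℝ × ℝ | 0 < p.1})
    (hf₃ : ContDiffOn ℝ (⊤ : ℕ∞) (Function.uncurry f₃) {p : ℝ × ℝ | 0 < p.1})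
    (hf₄ : ContDiffOn ℝ (⊤ : ℕ∞) (Function.uncurry f₄) {p : ℝ × ℝ | 0 < p.1})
    (hβ₁ : ContDiffOn ℝ (⊤ : ℕ∞) (Function.uncurry β₁) {p : ℝ × ℝ | 0 < p.1}) :
    (∀ ρ : ℝ, 0 < ρ → ∀ y : ℝ,
        BoxHR f₁ ρ y - 2 * f₁ ρ y - 2 * deriv (fun r => f₂ r y) ρ + 2 * f₃ ρ y = β₁ ρ y ∧
        BoxHR f₂ ρ y - 6 * f₂ ρ y + 6 * deriv (fun r => f₁ r y) ρ
            - 4 * deriv (fun r => f₃ r y) ρ + 6 * f₄ ρ y = 0 ∧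
        BoxHR f₃ ρ y - 6 * f₃ ρ y + 6 * f₁ ρ y + 4 * deriv (fun r => f₂ r y) ρ
            - 6 * deriv (fun r => f₄ r y) ρ = 0 ∧
        BoxHR f₄ ρ y - 2 * f₄ ρ y + 2 * f₂ ρ y + 2 * deriv (fun r => f₃ r y) ρ = 0)
      ↔
    (∀ ρ : ℝ, 0 < ρ → ∀ y : ℝ,
        BoxHC (Ksym1 f₁ f₂ f₃ f₄) ρ y + Ksym1 f₁ f₂ f₃ f₄ ρ y
            = 3 * Complex.exp (Complex.I * (ρ : ℂ)) * ((β₁ ρ y : ℝ) : ℂ) ∧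
        BoxHC (Ksym2 f₁ f₂ f₃ f₄) ρ y + Ksym2 f₁ f₂ f₃ f₄ ρ y
            = Complex.exp (3 * Complex.I * (ρ : ℂ)) * ((β₁ ρ y : ℝ) : ℂ)) := by
  have h13 := contDiffOn_lin19 3 1 f₁ f₃ hf₁ hf₃
  have h24 := contDiffOn_lin19 1 3 f₂ f₄ hf₂ hf₄
  have h13' := contDiffOn_lin19 1 (-1) f₁ f₃ hf₁ hf₃
  have h24' := contDiffOn_lin19 1 (-1) f₂ f₄ hf₂ hf₄
  have hK1 : Ksym1 f₁ f₂ f₃ f₄ = fun (r z : ℝ) => Complex.exp (((1:ℝ):ℂ) * Complex.I * (r:ℂ)) *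
      ((((3 * f₁ r z + 1 * f₃ r z : ℝ)):ℂ)
        + Complex.I * (((1 * f₂ r z + 3 * f₄ r z : ℝ)):ℂ)) := by
    funext r z
    rw [Ksym1, show ((1:ℝ):ℂ) * Complex.I * (r:ℂ) = Complex.I * r by push_cast; ring]
    push_cast
    ring
  have hK2 : Ksym2 f₁ f₂ f₃ f₄ = fun (r z : ℝ) => Complex.exp (((3:ℝ):ℂ) * Complex.I * (r:ℂ)) *
      ((((1 * f₁ r z + (-1) * f₃ r z : ℝ)):ℂ)
        + Complex.I * (((1 * f₂ r z + (-1) * f₄ r z : ℝ)):ℂ)) := by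
    funext r z
    rw [Ksym2, show ((3:ℝ):ℂ) * Complex.I * (r:ℂ) = 3 * Complex.I * r by push_cast; ring]
    push_cast
    ring
  have e1 : ∀ ρ : ℝ, 0 < ρ → ∀ y : ℝ,
      BoxHC (Ksym1 f₁ f₂ f₃ f₄) ρ y + Ksym1 f₁ f₂ f₃ f₄ ρ y
        = Complex.exp (Complex.I * (ρ:ℂ)) *
          (((3 * BoxHR f₁ ρ y + BoxHR f₃ ρ y - 2 * deriv (fun r => f₂ r y) ρ
              - 6 * deriv (fun r => f₄ r y) ρ : ℝ) : ℂ)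
            + Complex.I * ((BoxHR f₂ ρ y + 3 * BoxHR f₄ ρ y + 6 * deriv (fun r => f₁ r y) ρ
              + 2 * deriv (fun r => f₃ r y) ρ : ℝ) : ℂ)) := by
    intro ρ hρ y
    rw [hK1, boxC_formula19 1 _ _ h13 h24 hρ y,
      boxR_lin19 3 1 f₁ f₃ hf₁ hf₃ hρ y, boxR_lin19 1 3 f₂ f₄ hf₂ hf₄ hρ y,
      deriv_lin19 3 1 f₁ f₃ hf₁ hf₃ hρ y, deriv_lin19 1 3 f₂ f₄ hf₂ hf₄ hρ y,
      show ((1:ℝ):ℂ) * Complex.I * (ρ:ℂ) = Complex.I * ρ by push_cast; ring]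
    push_cast
    ring
  have e2 : ∀ ρ : ℝ, 0 < ρ → ∀ y : ℝ,
      BoxHC (Ksym2 f₁ f₂ f₃ f₄) ρ y + Ksym2 f₁ f₂ f₃ f₄ ρ y
        = Complex.exp (3 * Complex.I * (ρ:ℂ)) *
          (((BoxHR f₁ ρ y - BoxHR f₃ ρ y - 8 * f₁ ρ y + 8 * f₃ ρ y
              - 6 * deriv (fun r => f₂ r y) ρ + 6 * deriv (fun r => f₄ r y) ρ : ℝ) : ℂ)
            + Complex.I * ((BoxHR f₂ ρ y - BoxHR f₄ ρ y - 8 * f₂ ρ y + 8 * f₄ ρ y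
              + 6 * deriv (fun r => f₁ r y) ρ - 6 * deriv (fun r => f₃ r y) ρ : ℝ) : ℂ)) := by
    intro ρ hρ y
    rw [hK2, boxC_formula19 3 _ _ h13' h24' hρ y,
      boxR_lin19 1 (-1) f₁ f₃ hf₁ hf₃ hρ y, boxR_lin19 1 (-1) f₂ f₄ hf₂ hf₄ hρ y,
      deriv_lin19 1 (-1) f₁ f₃ hf₁ hf₃ hρ y, deriv_lin19 1 (-1) f₂ f₄ hf₂ hf₄ hρ y,
      show ((3:ℝ):ℂ) * Complex.I * (ρ:ℂ) = 3 * Complex.I * ρ by push_cast; ring]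
    push_cast
    ring
  refine forall_congr' fun ρ => imp_congr_right fun hρ => forall_congr' fun y => ?_
  have hC1 : (BoxHC (Ksym1 f₁ f₂ f₃ f₄) ρ y + Ksym1 f₁ f₂ f₃ f₄ ρ y
      = 3 * Complex.exp (Complex.I * (ρ:ℂ)) * ((β₁ ρ y : ℝ) : ℂ)) ↔
      (3 * BoxHR f₁ ρ y + BoxHR f₃ ρ y - 2 * deriv (fun r => f₂ r y) ρ
          - 6 * deriv (fun r => f₄ r y) ρ = 3 * β₁ ρ y ∧
        BoxHR f₂ ρ y + 3 * BoxHR f₄ ρ y + 6 * deriv (fun r => f₁ r y) ρ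
          + 2 * deriv (fun r => f₃ r y) ρ = 0) := by
    rw [e1 ρ hρ y,
      show (3:ℂ) * Complex.exp (Complex.I * (ρ:ℂ)) * ((β₁ ρ y : ℝ) : ℂ)
        = Complex.exp (Complex.I * (ρ:ℂ)) * ((3 * β₁ ρ y : ℝ) : ℂ) by push_cast; ring,
      mul_right_inj' (Complex.exp_ne_zero _), Complex.ext_iff]
    simp
  have hC2 : (BoxHC (Ksym2 f₁ f₂ f₃ f₄) ρ y + Ksym2 f₁ f₂ f₃ f₄ ρ y
      = Complex.exp (3 * Complex.I * (ρ:ℂ)) * ((β₁ ρ y : ℝ) : ℂ)) ↔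
      (BoxHR f₁ ρ y - BoxHR f₃ ρ y - 8 * f₁ ρ y + 8 * f₃ ρ y
          - 6 * deriv (fun r => f₂ r y) ρ + 6 * deriv (fun r => f₄ r y) ρ = β₁ ρ y ∧
        BoxHR f₂ ρ y - BoxHR f₄ ρ y - 8 * f₂ ρ y + 8 * f₄ ρ y
          + 6 * deriv (fun r => f₁ r y) ρ - 6 * deriv (fun r => f₃ r y) ρ = 0) := by
    rw [e2 ρ hρ y, mul_right_inj' (Complex.exp_ne_zero _), Complex.ext_iff]
    simp
  rw [hC1, hC2]
  constructor
  · rintro ⟨h1, h2, h3, h4⟩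
    exact ⟨⟨by linarith, by linarith⟩, by linarith, by linarith⟩
  · rintro ⟨⟨h1, h2⟩, h3, h4⟩
    exact ⟨by linarith, by linarith, by linarith, by linarith⟩
end
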